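/- Let R be a commutative ring, I an ideal of R, and n ≥ 3. Then E_n(I) ⊆ E_n^1(R, I), and consequently E_n(R, I²) ⊆ E_n^1(R, I). -/

import Mathlib

/-! Common definitions: unimodular elements, transvections, the groups `E(M)`,
elementary matrices, `E_n(R)` and relatives, unimodular rows, constant rank. -/

/-- An element `m` of an `A`-module `M` is unimodular if some linear functional maps it to `1`. -/
def IsUnimodular (A : Type*) [CommRing A] {M : Type*} [AddCommGroup M] [Module A M]
    (m : M) : Prop := ∃ φ : M →ₗ[A] A, φ m = 1

/-- A transvection of an `A`-module `M`: an automorphism `q ↦ q + φ(q) • p` with `φ(p) = 0`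
and `p` unimodular or `φ` unimodular in the dual module. -/
def IsTransvection (A : Type*) [CommRing A] {M : Type*} [AddCommGroup M] [Module A M]
    (τ : M ≃ₗ[A] M) : Prop :=
  ∃ (p : M) (φ : M →ₗ[A] A), φ p = 0 ∧ (IsUnimodular A p ∨ IsUnimodular A φ) ∧
    ∀ q : M, τ q = q + φ q • p

/-- `E(M)`: the subgroup of `Aut_A(M)` generated by all transvections. -/
def Egroup (A : Type*) [CommRing A] (M : Type*) [AddCommGroup M] [Module A M] :
    Subgroup (M ≃ₗ[A] M) := Subgroup.closure {τ | IsTransvection A τ}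

/-- `E(M)` acts transitively on `Um(M)`. -/
def ETransitive (A : Type*) [CommRing A] (M : Type*) [AddCommGroup M] [Module A M] : Prop :=
  ∀ u v : M, IsUnimodular A u → IsUnimodular A v → ∃ σ ∈ Egroup A M, σ u = v

/-- The elementary matrix `Id + a • e_{i j}`. -/
def elemMatrix {R : Type*} [CommRing R] {n : ℕ} (i j : Fin n) (a : R) :
    Matrix (Fin n) (Fin n) R := 1 + Matrix.single i j a

/-- `E_n(R)`: the subgroup of `GL_n(R)` generated by the elementary matrices `E_{ij}(a)`, `i ≠ j`. -/
def En (R : Type*) [CommRing R] (n : ℕ) : Subgroup (GL (Fin n) R) :=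
  Subgroup.closure {g | ∃ i j a, i ≠ j ∧ (g : Matrix (Fin n) (Fin n) R) = elemMatrix i j a}

/-- `E_n(I)`: the subgroup of `E_n(R)` generated by the `E_{ij}(a)` with `a ∈ I`. -/
def EnIdeal (R : Type*) [CommRing R] (n : ℕ) (I : Ideal R) : Subgroup (GL (Fin n) R) :=
  Subgroup.closure
    {g | ∃ i j a, i ≠ j ∧ a ∈ I ∧ (g : Matrix (Fin n) (Fin n) R) = elemMatrix i j a}

/-- `E_n(R, I)`: the normal closure of `E_n(I)` in `E_n(R)`. -/
def EnRel (R : Type*) [CommRing R] (n : ℕ) (I : Ideal R) : Subgroup (GL (Fin n) R) :=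
  Subgroup.closure {x | ∃ e ∈ En R n, ∃ g ∈ EnIdeal R n I, x = e * g * e⁻¹}

/-- `E_n^1(R, I)`: the subgroup generated by `E_{i1}(a)`, `a ∈ R`, `i ≠ 1`, together with
`E_{1j}(x)`, `x ∈ I`, `j ≠ 1` (indices `1,…,n` are `Fin n`, the first index being `⟨0, _⟩`). -/
def En1 (R : Type*) [CommRing R] (n : ℕ) (hn : 0 < n) (I : Ideal R) : Subgroup (GL (Fin n) R) :=
  Subgroup.closure
    {g | (∃ (i : Fin n) (a : R), i ≠ ⟨0, hn⟩ ∧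
            (g : Matrix (Fin n) (Fin n) R) = elemMatrix i ⟨0, hn⟩ a) ∨
         (∃ (j : Fin n) (x : R), x ∈ I ∧ j ≠ ⟨0, hn⟩ ∧
            (g : Matrix (Fin n) (Fin n) R) = elemMatrix ⟨0, hn⟩ j x)}

/-- A row is unimodular if its entries generate the unit ideal. -/
def IsUnimodularRow {R : Type*} [CommRing R] {n : ℕ} (v : Fin n → R) : Prop :=
  Ideal.span (Set.range v) = ⊤

/-- `E_n(R)` acts transitively on `Um_n(R)` (by right multiplication on rows). -/
def EnTransitive (R : Type*) [CommRing R] (n : ℕ) : Prop :=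
  ∀ u v : Fin n → R, IsUnimodularRow u → IsUnimodularRow v →
    ∃ g ∈ En R n, Matrix.vecMul u (g : Matrix (Fin n) (Fin n) R) = v

/-- A module `P` has constant rank `r`: the localization at every prime is free of rank `r`. -/
def HasConstantRank (A : Type*) [CommRing A] (P : Type*) [AddCommGroup P] [Module A P]
    (r : ℕ) : Prop :=
  ∀ (𝔭 : Ideal A) (_ : 𝔭.IsPrime),
    Nonempty ((LocalizedModule 𝔭.primeCompl P) ≃ₗ[Localization.AtPrime 𝔭]
      (Fin r → Localization.AtPrime 𝔭))

/-!
For `i, j ≠ 1` the elementary matrix `E_ij(a)` is the commutator `[E_i1(1), E_1j(a)]`, which gives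
`E_n(I) ⊆ E_n^1(R, I)`. It remains to see `E_n(R, I²) ⊆ E_n(I)`, and in fact `e E_ij(xy) e⁻¹ ∈ E_n(I)`
for every `e ∈ GL_n(R)` and `x, y ∈ I`. This conjugate is `1 + (x u)(y q)ᵀ`, where `u` is the `i`-th
column of `e` and `q`, `ρ` are the `j`-th and `i`-th rows of `e⁻¹`, so `q ⬝ u = 0` and `ρ ⬝ u = 1`.
Suslin's trick writes `q = ∑ ρ_k q_l (u_k e_l - u_l e_k)`, a sum of vectors orthogonal to `u`, each
supported on two coordinates. As `n ≥ 3`, each term vanishes at a third coordinate `m`, and a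
transvection `1 + v wᵀ` with `w ⟂ v`, entries in `I` and `w_m = 0` splits into an elementary row
operation and the commutator `[1 + v' e_mᵀ, 1 + e_m wᵀ]` of two products of elementary matrices
with entries in `I`.
-/

open Matrix

section RankOne

variable {ι R : Type*} [DecidableEq ι] [CommRing R]

theorem vecMulVec_single_single (i j : ι) (a b : R) :
    vecMulVec (Pi.single i a) (Pi.single j b) = single i j (a * b) := by
  ext k l
  simp only [vecMulVec_apply, single_apply, Pi.single_apply]
  split_ifs <;> grind

theorem Pi.single_eq_smul_single_one (i : ι) (a : R) :
    Pi.single i a = a • (Pi.single i 1 : ι → R) := by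
  rw [← Pi.single_smul', smul_eq_mul, mul_one]

def koszulSyzygy (u : ι → R) (k l : ι) : ι → R := u k • Pi.single l 1 - u l • Pi.single k 1

theorem koszulSyzygy_apply_of_ne (u : ι → R) {k l m : ι} (hk : m ≠ k) (hl : m ≠ l) :
    koszulSyzygy u k l m = 0 := by
  simp [koszulSyzygy, hk, hl]

variable [Fintype ι]

theorem koszulSyzygy_dotProduct_self (u : ι → R) (k l : ι) : koszulSyzygy u k l ⬝ᵥ u = 0 := by
  simp [koszulSyzygy, sub_dotProduct, mul_comm]

theorem sum_sum_smul_koszulSyzygy (ρ q u : ι → R) :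
    ∑ k, ∑ l, (ρ k * q l) • koszulSyzygy u k l = (ρ ⬝ᵥ u) • q - (q ⬝ᵥ u) • ρ := by
  ext t
  simp [koszulSyzygy, Finset.sum_apply, Pi.single_apply, dotProduct, Finset.sum_mul, mul_sub,
    Finset.sum_sub_distrib]
  congr 1 <;> exact Finset.sum_congr rfl fun _ _ => by ring

theorem one_add_vecMulVec_mul_one_add_vecMulVec (v w v' w' : ι → R) :
    (1 + vecMulVec v w) * (1 + vecMulVec v' w') =
      1 + vecMulVec v w + vecMulVec v' w' + vecMulVec v ((w ⬝ᵥ v') • w') := by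
  rw [add_mul, mul_add, mul_add, one_mul, mul_one, one_mul, vecMulVec_mul_vecMulVec]
  abel

theorem one_add_vecMulVec_mul_same_left {v w w' : ι → R} (h : w ⬝ᵥ v = 0) :
    (1 + vecMulVec v w) * (1 + vecMulVec v w') = 1 + vecMulVec v (w + w') := by
  rw [one_add_vecMulVec_mul_one_add_vecMulVec, h, zero_smul, vecMulVec_zero, add_zero,
    vecMulVec_add, add_assoc]

theorem one_add_vecMulVec_mul_same_right {v v' w : ι → R} (h : w ⬝ᵥ v' = 0) :
    (1 + vecMulVec v w) * (1 + vecMulVec v' w) = 1 + vecMulVec (v + v') w := by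
  rw [one_add_vecMulVec_mul_one_add_vecMulVec, h, zero_smul, vecMulVec_zero, add_zero,
    add_vecMulVec, add_assoc]

theorem commutator_one_add_vecMulVec {p v w : ι → R} (hpv : p ⬝ᵥ v = 0) (hwp : w ⬝ᵥ p = 0)
    (hpp : p ⬝ᵥ p = 1) (hwv : w ⬝ᵥ v = 0) :
    (1 + vecMulVec v p) * (1 + vecMulVec p w) * (1 + vecMulVec (-v) p) *
      (1 + vecMulVec p (-w)) = 1 + vecMulVec v w := by
  simp only [add_mul, mul_add, one_mul, mul_one, mul_neg, neg_mul, vecMulVec_neg, neg_vecMulVec,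
    vecMulVec_mul_vecMulVec, hpv, hwp, hpp, hwv, zero_smul, one_smul, vecMulVec_zero, add_zero]
  abel

theorem conj_one_add_vecMulVec {A B : Matrix ι ι R} (hAB : A * B = 1) (v w : ι → R) :
    A * (1 + vecMulVec v w) * B = 1 + vecMulVec (A *ᵥ v) (w ᵥ* B) := by
  rw [mul_add, mul_one, add_mul, hAB, mul_vecMulVec, vecMulVec_mul]

def transvectionRight (S : Submonoid (Matrix ι ι R)) (v : ι → R) : AddSubmonoid (ι → R) where
  carrier := {w | w ⬝ᵥ v = 0 ∧ 1 + vecMulVec v w ∈ S}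
  add_mem' := fun {w w'} ⟨hw, hS⟩ ⟨hw', hS'⟩ =>
    ⟨by rw [add_dotProduct, hw, hw', add_zero],
      one_add_vecMulVec_mul_same_left (w' := w') hw ▸ S.mul_mem hS hS'⟩
  zero_mem' := ⟨zero_dotProduct v, by simp [S.one_mem]⟩

def transvectionLeft (S : Submonoid (Matrix ι ι R)) (w : ι → R) : AddSubmonoid (ι → R) where
  carrier := {v | w ⬝ᵥ v = 0 ∧ 1 + vecMulVec v w ∈ S}
  add_mem' := fun {v v'} ⟨hv, hS⟩ ⟨hv', hS'⟩ =>
    ⟨by rw [dotProduct_add, hv, hv', add_zero],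
      one_add_vecMulVec_mul_same_right (v := v) hv' ▸ S.mul_mem hS hS'⟩
  zero_mem' := ⟨dotProduct_zero w, by simp [S.one_mem]⟩

end RankOne

/-- Working in the image of `H` in `M`, a matrix `1 + vecMulVec v w` can be shown to come from `H`
without first exhibiting it as a unit. -/
def Subgroup.coeSubmonoid {M : Type*} [Monoid M] (H : Subgroup Mˣ) : Submonoid M :=
  H.toSubmonoid.map (Units.coeHom M)

theorem Subgroup.coe_mem_coeSubmonoid {M : Type*} [Monoid M] {H : Subgroup Mˣ} {g : Mˣ} :
    (g : M) ∈ H.coeSubmonoid ↔ g ∈ H :=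
  ⟨fun ⟨_, hg', h⟩ => Units.ext h ▸ hg', fun hg => ⟨g, hg, rfl⟩⟩

section Elementary

variable {R : Type*} [CommRing R] {n : ℕ}

theorem elemMatrix_mul_elemMatrix {i j : Fin n} (hij : i ≠ j) (a b : R) :
    elemMatrix i j a * elemMatrix i j b = elemMatrix i j (a + b) :=
  transvection_mul_transvection_same i j hij a b

theorem one_add_vecMulVec_single_single (i j : Fin n) (a b : R) :
    1 + vecMulVec (Pi.single i a) (Pi.single j b) = elemMatrix i j (a * b) := by
  rw [vecMulVec_single_single, elemMatrix]

def elemUnit {i j : Fin n} (hij : i ≠ j) (a : R) : GL (Fin n) R where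
  val := elemMatrix i j a
  inv := elemMatrix i j (-a)
  val_inv := by rw [elemMatrix_mul_elemMatrix hij, add_neg_cancel]; exact transvection_zero i j
  inv_val := by rw [elemMatrix_mul_elemMatrix hij, neg_add_cancel]; exact transvection_zero i j

theorem elemMatrix_mem_EnIdeal {I : Ideal R} {i j : Fin n} (hij : i ≠ j) {a : R} (ha : a ∈ I) :
    elemMatrix i j a ∈ (EnIdeal R n I).coeSubmonoid :=
  Subgroup.coe_mem_coeSubmonoid (g := elemUnit hij a).2
    (Subgroup.subset_closure ⟨i, j, a, hij, ha, rfl⟩)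

theorem elemMatrix_mem_En1_of_col (hn : 0 < n) (I : Ideal R) {i : Fin n} (hi : i ≠ ⟨0, hn⟩)
    (a : R) : elemMatrix i ⟨0, hn⟩ a ∈ (En1 R n hn I).coeSubmonoid :=
  Subgroup.coe_mem_coeSubmonoid (g := elemUnit hi a).2
    (Subgroup.subset_closure (Or.inl ⟨i, a, hi, rfl⟩))

theorem elemMatrix_mem_En1_of_row (hn : 0 < n) {I : Ideal R} {j : Fin n} (hj : j ≠ ⟨0, hn⟩)
    {x : R} (hx : x ∈ I) : elemMatrix ⟨0, hn⟩ j x ∈ (En1 R n hn I).coeSubmonoid :=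
  Subgroup.coe_mem_coeSubmonoid (g := elemUnit hj.symm x).2
    (Subgroup.subset_closure (Or.inr ⟨j, x, hx, hj, rfl⟩))

theorem EnIdeal_le_En1 (hn : 0 < n) (I : Ideal R) : EnIdeal R n I ≤ En1 R n hn I := by
  refine (Subgroup.closure_le _).2 ?_
  rintro g ⟨i, j, a, hij, ha, hg⟩
  obtain rfl | hj := eq_or_ne j ⟨0, hn⟩
  · exact Subgroup.subset_closure (Or.inl ⟨i, a, hij, hg⟩)
  obtain rfl | hi := eq_or_ne i ⟨0, hn⟩
  · exact Subgroup.subset_closure (Or.inr ⟨j, a, ha, hj, hg⟩)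
  rw [SetLike.mem_coe, ← Subgroup.coe_mem_coeSubmonoid, hg, ← one_mul a,
    ← one_add_vecMulVec_single_single,
    ← commutator_one_add_vecMulVec (p := Pi.single ⟨0, hn⟩ 1) (by simp [Ne.symm hi]) (by simp [hj])
      (by simp) (by simp [Ne.symm hij])]
  simp only [← Pi.single_neg, one_add_vecMulVec_single_single, one_mul, mul_one]
  exact mul_mem (mul_mem (mul_mem (elemMatrix_mem_En1_of_col hn I hi 1)
    (elemMatrix_mem_En1_of_row hn hj ha)) (elemMatrix_mem_En1_of_col hn I hi (-1)))
    (elemMatrix_mem_En1_of_row hn hj (neg_mem ha))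

end Elementary

section Relative

variable {R : Type*} [CommRing R] {n : ℕ} {I : Ideal R}

theorem mem_transvectionRight_single {m : Fin n} {w : Fin n → R} (hw : ∀ k, w k ∈ I)
    (hwm : w m = 0) : w ∈ transvectionRight (EnIdeal R n I).coeSubmonoid (Pi.single m 1) := by
  rw [← Finset.univ_sum_single w]
  refine AddSubmonoid.sum_mem _ fun k _ => ?_
  obtain rfl | hkm := eq_or_ne k m
  · simp [hwm, zero_mem]
  refine ⟨by simp [hkm], ?_⟩
  rw [one_add_vecMulVec_single_single, one_mul]
  exact elemMatrix_mem_EnIdeal hkm.symm (hw k)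

theorem mem_transvectionLeft_single {m : Fin n} {v : Fin n → R} (hv : ∀ k, v k ∈ I)
    (hvm : v m = 0) : v ∈ transvectionLeft (EnIdeal R n I).coeSubmonoid (Pi.single m 1) := by
  rw [← Finset.univ_sum_single v]
  refine AddSubmonoid.sum_mem _ fun k _ => ?_
  obtain rfl | hkm := eq_or_ne k m
  · simp [hvm, zero_mem]
  refine ⟨by simp [hkm.symm], ?_⟩
  rw [one_add_vecMulVec_single_single, mul_one]
  exact elemMatrix_mem_EnIdeal hkm (hv k)

theorem one_add_vecMulVec_mem_EnIdeal {m : Fin n} {v w : Fin n → R} (hv : ∀ k, v k ∈ I)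
    (hw : ∀ k, w k ∈ I) (hwm : w m = 0) (hwv : w ⬝ᵥ v = 0) :
    1 + vecMulVec v w ∈ (EnIdeal R n I).coeSubmonoid := by
  suffices v ∈ transvectionLeft (EnIdeal R n I).coeSubmonoid w from this.2
  set v' := v - Pi.single m (v m)
  have hv' : ∀ k, v' k ∈ I := fun k => sub_mem (hv k) (by
    rcases eq_or_ne k m with rfl | hk <;> simp [*])
  have hv'm : v' m = 0 := by simp [v']
  have hwv' : w ⬝ᵥ v' = 0 := by simp [v', dotProduct_sub, hwm, hwv]
  rw [← sub_add_cancel v (Pi.single m (v m))]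
  refine add_mem ⟨hwv', ?_⟩ ⟨by simp [hwm], ?_⟩
  · rw [← commutator_one_add_vecMulVec (p := Pi.single m 1) (by simp [hv'm]) (by simp [hwm])
      (by simp) hwv']
    exact mul_mem (mul_mem (mul_mem (mem_transvectionLeft_single hv' hv'm).2
      (mem_transvectionRight_single hw hwm).2)
      (mem_transvectionLeft_single (fun k => neg_mem (hv' k)) (by simp [hv'm])).2)
      (mem_transvectionRight_single (fun k => neg_mem (hw k)) (by simp [hwm])).2
  · have hrow : vecMulVec (Pi.single m (v m)) w = vecMulVec (Pi.single m 1) (v m • w) := by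
      rw [vecMulVec_smul, ← smul_vecMulVec, ← Pi.single_eq_smul_single_one]
    rw [hrow]
    exact (mem_transvectionRight_single (fun k => I.mul_mem_left _ (hw k)) (by simp [hwm])).2

theorem one_add_vecMulVec_smul_mem_EnIdeal (hn : 3 ≤ n) {x y : R} (hx : x ∈ I) (hy : y ∈ I)
    {u q ρ : Fin n → R} (hqu : q ⬝ᵥ u = 0) (hρu : ρ ⬝ᵥ u = 1) :
    1 + vecMulVec (x • u) (y • q) ∈ (EnIdeal R n I).coeSubmonoid := by
  suffices y • q ∈ transvectionRight (EnIdeal R n I).coeSubmonoid (x • u) from this.2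
  have hsum : y • q = ∑ k, ∑ l, y • (ρ k * q l) • koszulSyzygy u k l := by
    simp only [← Finset.smul_sum, sum_sum_smul_koszulSyzygy, hρu, hqu, one_smul, zero_smul,
      sub_zero]
  rw [hsum]
  refine AddSubmonoid.sum_mem _ fun k _ => AddSubmonoid.sum_mem _ fun l _ => ?_
  obtain ⟨m, hmk, hml⟩ := Fin.exists_ne_and_ne_of_two_lt k l hn
  have horth : (y • (ρ k * q l) • koszulSyzygy u k l) ⬝ᵥ x • u = 0 := by
    simp [koszulSyzygy_dotProduct_self]
  refine ⟨horth, one_add_vecMulVec_mem_EnIdeal (m := m) (fun i => I.mul_mem_right _ hx)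
    (fun i => I.mul_mem_right _ hy) ?_ horth⟩
  simp [koszulSyzygy_apply_of_ne u hmk hml]

theorem conj_elemMatrix_mem_EnIdeal (hn : 3 ≤ n) (e : GL (Fin n) R) {i j : Fin n} (hij : i ≠ j)
    {a : R} (ha : a ∈ I ^ 2) :
    (e : Matrix (Fin n) (Fin n) R) * elemMatrix i j a * (e⁻¹ : GL (Fin n) R) ∈
      (EnIdeal R n I).coeSubmonoid := by
  rw [pow_two] at ha
  induction ha using Submodule.mul_induction_on' with
  | mem_mul_mem x hx y hy =>
    rw [← one_add_vecMulVec_single_single, conj_one_add_vecMulVec (Units.mul_inv e),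
      Pi.single_eq_smul_single_one i, Pi.single_eq_smul_single_one j, mulVec_smul, smul_vecMul]
    refine one_add_vecMulVec_smul_mem_EnIdeal hn hx hy (ρ := Pi.single i 1 ᵥ* ↑e⁻¹) ?_ ?_
    all_goals rw [← dotProduct_mulVec, mulVec_mulVec, Units.inv_mul, one_mulVec]
    · simp [hij]
    · simp
  | add a _ b _ ha hb =>
    rw [← elemMatrix_mul_elemMatrix hij]
    simpa only [mul_assoc, Units.inv_mul_cancel_left] using mul_mem ha hb

end Relative

theorem EnRel_sq_le_EnIdeal {R : Type*} [CommRing R] {n : ℕ} (hn : 3 ≤ n) (I : Ideal R) :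
    EnRel R n (I ^ 2) ≤ EnIdeal R n I := by
  refine (Subgroup.closure_le _).2 ?_
  rintro _ ⟨e, -, g, hg, rfl⟩
  suffices EnIdeal R n (I ^ 2) ≤ (EnIdeal R n I).comap (MulAut.conj e) from this hg
  refine (Subgroup.closure_le _).2 ?_
  rintro g ⟨i, j, a, hij, ha, hg⟩
  change e * g * e⁻¹ ∈ EnIdeal R n I
  rw [← Subgroup.coe_mem_coeSubmonoid, Units.val_mul, Units.val_mul, hg]
  exact conj_elemMatrix_mem_EnIdeal hn e hij ha

/-- **Lemma.** For `n ≥ 3` and an ideal `I` of `R`, `E_n(I) ⊆ E_n^1(R, I)`, and consequently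
`E_n(R, I²) ⊆ E_n^1(R, I)`. -/
theorem EnIdeal_subset_En1 (R : Type) [CommRing R] (I : Ideal R) (n : ℕ) (hn : 3 ≤ n) :
    EnIdeal R n I ≤ En1 R n (by omega) I ∧ EnRel R n (I ^ 2) ≤ En1 R n (by omega) I :=
  ⟨EnIdeal_le_En1 _ I, (EnRel_sq_le_EnIdeal hn I).trans (EnIdeal_le_En1 _ I)⟩
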